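/- Let s ≥ 2 be a fixed integer. There is a constant C, depending only on s, such that for every integer n large enough and all indices l_1,…,l_s, h_1, h_2 ∈ {1,…,n} with l_1 = l_2, with l_2,…,l_s mutually distinct and each of l_2,…,l_s distinct from both h_1 and h_2, the joint cumulant of the 2s+2 variables (Z_{l_1}, Z_{l_1}, …, Z_{l_s}, Z_{l_s}, Z_{h_1}, Z_{h_2}) satisfies |C(Z_{l_1},Z_{l_1},…,Z_{l_s},Z_{l_s},Z_{h_1},Z_{h_2})| ≤ C·n^{−1}·|E[Z_{h_1} Z_{h_2}]|. -/

import Mathlib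

open MeasureTheory ProbabilityTheory Finset

noncomputable section

instance permMS (n : ℕ) : MeasurableSpace (Equiv.Perm (Fin n)) := ⊤

/-- The uniform probability measure on the set of all `n!` permutations of `{1,…,n}`. -/
def permMeasure (n : ℕ) : Measure (Equiv.Perm (Fin n)) :=
  (PMF.uniformOfFintype (Equiv.Perm (Fin n))).toMeasure

/-- The rank `Q_i` of the random permutation, as a real number in `{1,…,n}`. -/
def Qr (n : ℕ) (i : Fin n) (σ : Equiv.Perm (Fin n)) : ℝ := (σ i : ℕ) + 1

/-- The centralized and normalized rank `Z_i = sqrt(12/(n²−1))·(Q_i − (n+1)/2)`. -/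
def Zr (n : ℕ) (i : Fin n) (σ : Equiv.Perm (Fin n)) : ℝ :=
  Real.sqrt (12 / ((n : ℝ) ^ 2 - 1)) * (Qr n i σ - ((n : ℝ) + 1) / 2)


attribute [local instance] Classical.propDecidable

/-- `P` is a set partition of the (finite) index type `ι`: its blocks are nonempty and
every index lies in exactly one block. -/
def IsSetPartition {ι : Type*} [Fintype ι] (P : Finset (Finset ι)) : Prop :=
  (∀ A ∈ P, A.Nonempty) ∧ ∀ i : ι, ∃! A : Finset ι, A ∈ P ∧ i ∈ A

/-- A perfect matching: a set partition all of whose blocks have two elements. -/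
def IsPerfectMatching {ι : Type*} [Fintype ι] (P : Finset (Finset ι)) : Prop :=
  IsSetPartition P ∧ ∀ A ∈ P, A.card = 2

/-- The joint cumulant `C(ξ_1,…,ξ_N) = Σ_{π} (−1)^{#π−1}(#π−1)! Π_{A∈π} E[Π_{i∈A} ξ_i]`,
where the sum runs over all set partitions of the index set. -/
def jointCumulant {Ω : Type*} [MeasurableSpace Ω] (μ : Measure Ω)
    {ι : Type*} [Fintype ι] (ξ : ι → Ω → ℝ) : ℝ :=
  ∑ P ∈ Finset.univ.filter (fun P : Finset (Finset ι) => IsSetPartition P),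
    (-1 : ℝ) ^ (P.card - 1) * (Nat.factorial (P.card - 1) : ℝ) *
      ∏ A ∈ P, ∫ ω, (∏ i ∈ A, ξ i ω) ∂μ

/-- `E_σ(ξ) = Π_{A∈σ} E[Π_{i∈A} ξ_i]`. -/
def momProd {Ω : Type*} [MeasurableSpace Ω] (μ : Measure Ω)
    {ι : Type*} (P : Finset (Finset ι)) (ξ : ι → Ω → ℝ) : ℝ :=
  ∏ A ∈ P, ∫ ω, (∏ i ∈ A, ξ i ω) ∂μ

/-- `C_π(ξ) = Π_{A∈π} C({ξ_i}_{i∈A})`, the product over the blocks of `π` of the joint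
cumulants of the variables indexed by each block. -/
def cumProd {Ω : Type*} [MeasurableSpace Ω] (μ : Measure Ω)
    {ι : Type*} [Fintype ι] (P : Finset (Finset ι)) (ξ : ι → Ω → ℝ) : ℝ :=
  ∏ A ∈ P, jointCumulant μ (fun a : {x // x ∈ A} => ξ a.1)

/-- The relation generating the join `P ∨ Q` of two set partitions: the equivalence closure
of "lying in a common block of `P` or of `Q`". -/
def joinRel {ι : Type*} (P Q : Finset (Finset ι)) : ι → ι → Prop :=
  Relation.EqvGen fun a b => (∃ A ∈ P, a ∈ A ∧ b ∈ A) ∨ (∃ A ∈ Q, a ∈ A ∧ b ∈ A)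

/-- `B` is a block of the join `P ∨ Q`, i.e. an equivalence class of `joinRel P Q`. -/
def IsJoinBlock {ι : Type*} [Fintype ι] (P Q : Finset (Finset ι)) (B : Finset ι) : Prop :=
  ∃ a : ι, B = Finset.univ.filter (fun b => joinRel P Q a b)

/-- The set of blocks of the join `P ∨ Q`. -/
def joinBlocks {ι : Type*} [Fintype ι] (P Q : Finset (Finset ι)) : Finset (Finset ι) :=
  Finset.univ.filter (fun B : Finset ι => IsJoinBlock P Q B)

/-- `#(P ∨ Q)`, the number of blocks of the join of two set partitions. -/
def joinCard {ι : Type*} [Fintype ι] (P Q : Finset (Finset ι)) : ℕ :=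
  (joinBlocks P Q).card

/-- A word `j` is `π`-measurable if `j_α = j_β` whenever `α, β` lie in the same block. -/
def WordMeasurable {ι κ : Type*} (P : Finset (Finset ι)) (j : ι → κ) : Prop :=
  ∀ A ∈ P, ∀ a ∈ A, ∀ b ∈ A, j a = j b

/-!
Write `κ_T(ξ)` for the cumulant formula restricted to a set `T` of set partitions. As a function
of the variable in one slot `α`, `κ_T` is integration against a kernel built from the block-mates
of `α`. For a uniform permutation `σ`, a function `F` of the values `σ i`, `i ∈ I`, and `j ∉ I`,
exchangeability gives `(n - #I) E[g(σ j) F] = (∑ g) E[F] - ∑_{i ∈ I} E[g(σ i) F]`. Since the rank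
scores sum to zero, trading `Z_j` for the `Z_i`, `i ∈ L`, gains a factor `#L / (n - #L)`.

If `h₀ = h₁ = j`, the partitions separating the slots `a`, `b` of the two copies of `Z_j` gain
this factor twice. On the partitions joining them only the product `Z_j²` matters; one trade
leaves `(∑ z²) κ(1, 1, …)`, and that vanishes: each partition `Q` having `{a, b}` as a block
accounts for the `#Q - 1` partitions obtained by merging `{a, b}` into another block, which have
the same moments and one block fewer, and `c(k) + (k - 1) c(k - 1) = 0` for the Möbius
coefficients `c`. So `κ = O(1/n) = O(1/n) E[Z_j²]`.

If `h₀ ≠ h₁`, one trade of `Z_{h₀}` against `I = L ∪ {h₁}` produces cumulants of the first kind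
and cumulants in which `Z_{h₁}` can still be traded, all `O(1/n)`; hence `κ = O(1/n²)`, while
`|E[Z_{h₀} Z_{h₁}]| = 1/(n - 1)`.
-/

section Update

variable {Ω ι : Type*} {a b : ι}

theorem Finset.prod_update_apply_of_notMem {s : Finset ι} {α : ι} (hα : α ∉ s)
    (ξ : ι → Ω → ℝ) (f : Ω → ℝ) (ω : Ω) :
    ∏ i ∈ s, Function.update ξ α f i ω = ∏ i ∈ s, ξ i ω :=
  Finset.prod_congr rfl fun i hi => by rw [Function.update_of_ne (ne_of_mem_of_not_mem hi hα)]

theorem Finset.prod_update_apply_of_mem {s : Finset ι} {α : ι} (hα : α ∈ s)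
    (ξ : ι → Ω → ℝ) (f : Ω → ℝ) (ω : Ω) :
    ∏ i ∈ s, Function.update ξ α f i ω = f ω * ∏ i ∈ s.erase α, ξ i ω := by
  rw [← Finset.mul_prod_erase s _ hα, Function.update_self,
    Finset.prod_update_apply_of_notMem (Finset.notMem_erase α s)]

theorem abs_update_le {α : ι} {ξ : ι → Ω → ℝ} {f : Ω → ℝ} {M : ℝ}
    (hξ : ∀ i ω, |ξ i ω| ≤ M) (hf : ∀ ω, |f ω| ≤ M) (i : ι) (ω : Ω) :
    |Function.update ξ α f i ω| ≤ M := by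
  rcases eq_or_ne i α with rfl | hi
  · simpa using hf ω
  · simpa [Function.update_of_ne hi] using hξ i ω

def BlockmatesIn (T : Finset (Finset (Finset ι))) (α : ι) (ξ : ι → Ω → ℝ)
    (S : Subalgebra ℝ (Ω → ℝ)) : Prop :=
  ∀ P ∈ T, ∀ A ∈ P, α ∈ A → ∀ β ∈ A, β ≠ α → ξ β ∈ S

theorem BlockmatesIn.of_forall {T : Finset (Finset (Finset ι))} {α : ι} {ξ : ι → Ω → ℝ}
    {S : Subalgebra ℝ (Ω → ℝ)} (h : ∀ β, β ≠ α → ξ β ∈ S) : BlockmatesIn T α ξ S :=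
  fun _ _ _ _ _ β _ hβ => h β hβ

theorem prod_update_update_mul {A : Finset ι} (hab : a ≠ b) (h : a ∈ A ↔ b ∈ A)
    (ξ : ι → Ω → ℝ) (ω : Ω) :
    ∏ i ∈ A, Function.update (Function.update ξ a 1) b (ξ a * ξ b) i ω = ∏ i ∈ A, ξ i ω := by
  by_cases ha : a ∈ A
  · have ha' : a ∈ A.erase b := Finset.mem_erase.2 ⟨hab, ha⟩
    rw [Finset.prod_update_apply_of_mem (h.1 ha), Finset.prod_update_apply_of_mem ha',
      ← Finset.mul_prod_erase A _ (h.1 ha), ← Finset.mul_prod_erase (A.erase b) _ ha']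
    simp only [Pi.mul_apply, Pi.one_apply]
    ring
  · rw [Finset.prod_update_apply_of_notMem (mt h.2 ha), Finset.prod_update_apply_of_notMem ha]

end Update

namespace IsSetPartition

variable {ι : Type*} [Fintype ι] {P : Finset (Finset ι)}

theorem eq_of_mem (hP : IsSetPartition P) {A B : Finset ι} (hA : A ∈ P) (hB : B ∈ P) {i : ι}
    (hiA : i ∈ A) (hiB : i ∈ B) : A = B :=
  (hP.2 i).unique ⟨hA, hiA⟩ ⟨hB, hiB⟩

theorem exists_mem (hP : IsSetPartition P) (i : ι) : ∃ A ∈ P, i ∈ A :=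
  let ⟨A, hA, _⟩ := hP.2 i
  ⟨A, hA⟩

theorem of_exists_mem (hne : ∀ A ∈ P, A.Nonempty) (hcover : ∀ i, ∃ A ∈ P, i ∈ A)
    (hdisj : ∀ A ∈ P, ∀ B ∈ P, ∀ i ∈ A, i ∈ B → A = B) : IsSetPartition P := by
  refine ⟨hne, fun i => ?_⟩
  obtain ⟨A, hA, hiA⟩ := hcover i
  exact ⟨A, ⟨hA, hiA⟩, fun B ⟨hB, hiB⟩ => hdisj B hB A hA i hiB hiA⟩

theorem notMem_erase_of_mem (hP : IsSetPartition P) {A B : Finset ι} (hA : A ∈ P) {i : ι}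
    (hiA : i ∈ A) (hiB : i ∈ B) : B ∉ P.erase A := fun hB =>
  Finset.ne_of_mem_erase hB (hP.eq_of_mem (Finset.mem_of_mem_erase hB) hA hiB hiA)

theorem sum_card (hP : IsSetPartition P) : ∑ A ∈ P, A.card = Fintype.card ι :=
  (Finpartition.ofExistsUnique P (fun _ _ => Finset.subset_univ _) (fun i _ => hP.2 i)
    fun h => Finset.not_nonempty_empty (hP.1 ∅ h)).sum_card_parts

theorem disjoint (hP : IsSetPartition P) {A B : Finset ι} (hA : A ∈ P) (hB : B ∈ P)
    (hAB : A ≠ B) : Disjoint A B :=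
  Finset.disjoint_left.2 fun _ hiA hiB => hAB (hP.eq_of_mem hA hB hiA hiB)

end IsSetPartition

section Partitions

variable {ι : Type*} [Fintype ι] {a b : ι}

def setPartitions (ι : Type*) [Fintype ι] : Finset (Finset (Finset ι)) :=
  Finset.univ.filter IsSetPartition

def SameBlock (P : Finset (Finset ι)) (a b : ι) : Prop :=
  ∃ A ∈ P, a ∈ A ∧ b ∈ A

theorem mem_setPartitions {P : Finset (Finset ι)} : P ∈ setPartitions ι ↔ IsSetPartition P := by
  simp [setPartitions]

def mergeBlocks (P : Finset (Finset ι)) (A B : Finset ι) : Finset (Finset ι) :=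
  insert (A ∪ B) ((P.erase A).erase B)

def splitBlock (P : Finset (Finset ι)) (C S : Finset ι) : Finset (Finset ι) :=
  insert S (insert (C \ S) (P.erase C))

variable {P : Finset (Finset ι)} {A B C S : Finset ι}

theorem IsSetPartition.union_notMem_erase_erase (hP : IsSetPartition P) (hA : A ∈ P) :
    A ∪ B ∉ (P.erase A).erase B := fun h =>
  let ⟨_, hi⟩ := hP.1 A hA
  hP.notMem_erase_of_mem hA hi (Finset.mem_union_left B hi) (Finset.mem_of_mem_erase h)

theorem IsSetPartition.merge (hP : IsSetPartition P) (hA : A ∈ P) (hB : B ∈ P) :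
    IsSetPartition (mergeBlocks P A B) := by
  have hrest : ∀ D ∈ (P.erase A).erase B, D ∈ P ∧ Disjoint D (A ∪ B) := fun D hD => by
    obtain ⟨hDB, hDA, hD⟩ : D ≠ B ∧ D ≠ A ∧ D ∈ P := by simpa using hD
    refine ⟨hD, Finset.disjoint_union_right.2 ⟨?_, ?_⟩⟩ <;>
      refine Finset.disjoint_left.2 fun i hiD hi => ?_
    exacts [hDA (hP.eq_of_mem hD hA hiD hi), hDB (hP.eq_of_mem hD hB hiD hi)]
  have hblock : ∀ D ∈ mergeBlocks P A B, ∀ i ∈ D, i ∈ A ∪ B → D = A ∪ B := fun D hD i hiD hi => by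
    rcases Finset.mem_insert.1 hD with rfl | hD
    · rfl
    · exact absurd hi (Finset.disjoint_left.1 (hrest D hD).2 hiD)
  refine .of_exists_mem (fun D hD => ?_) (fun i => ?_) fun D hD D' hD' i hiD hiD' => ?_
  · rcases Finset.mem_insert.1 hD with rfl | hD
    · exact (hP.1 A hA).mono Finset.subset_union_left
    · exact hP.1 D (hrest D hD).1
  · obtain ⟨D, hD, hiD⟩ := hP.exists_mem i
    by_cases hD' : D ∈ (P.erase A).erase B
    · exact ⟨D, Finset.mem_insert_of_mem hD', hiD⟩
    · refine ⟨A ∪ B, Finset.mem_insert_self _ _, ?_⟩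
      obtain rfl | rfl : D = B ∨ D = A := by simp only [Finset.mem_erase, hD] at hD'; tauto
      exacts [Finset.mem_union_right _ hiD, Finset.mem_union_left _ hiD]
  · by_cases hi : i ∈ A ∪ B
    · rw [hblock D hD i hiD hi, hblock D' hD' i hiD' hi]
    · have hmem : ∀ E ∈ mergeBlocks P A B, i ∈ E → E ∈ P := fun E hE hiE =>
        (hrest E ((Finset.mem_insert.1 hE).resolve_left fun h => hi (h ▸ hiE))).1
      exact hP.eq_of_mem (hmem D hD hiD) (hmem D' hD' hiD') hiD hiD'

theorem IsSetPartition.card_mergeBlocks (hP : IsSetPartition P) (hA : A ∈ P) (hB : B ∈ P)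
    (hAB : A ≠ B) : (mergeBlocks P A B).card = P.card - 1 := by
  have hB' : B ∈ P.erase A := Finset.mem_erase.2 ⟨hAB.symm, hB⟩
  have h2 : 2 ≤ P.card := Finset.one_lt_card.2 ⟨A, hA, B, hB, hAB⟩
  rw [mergeBlocks, Finset.card_insert_of_notMem (hP.union_notMem_erase_erase hA),
    Finset.card_erase_of_mem hB', Finset.card_erase_of_mem hA]
  omega

theorem IsSetPartition.erase_mergeBlocks (hP : IsSetPartition P) (hA : A ∈ P) :
    (mergeBlocks P A B).erase (A ∪ B) = (P.erase A).erase B :=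
  Finset.erase_insert (hP.union_notMem_erase_erase hA)

theorem IsSetPartition.insert_insert_erase_mergeBlocks (hP : IsSetPartition P) (hA : A ∈ P)
    (hB : B ∈ P.erase A) : insert A (insert B ((mergeBlocks P A B).erase (A ∪ B))) = P := by
  rw [hP.erase_mergeBlocks hA, Finset.insert_erase hB, Finset.insert_erase hA]

theorem IsSetPartition.split (hP : IsSetPartition P) (hC : C ∈ P) (hS : S ⊆ C)
    (hSne : S.Nonempty) (hCS : (C \ S).Nonempty) : IsSetPartition (splitBlock P C S) := by
  have hin : ∀ D ∈ splitBlock P C S, ∀ i ∈ D, i ∈ C → D = S ∨ D = C \ S := fun D hD i hiD hi => by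
    rcases Finset.mem_insert.1 hD with rfl | hD
    · exact .inl rfl
    rcases Finset.mem_insert.1 hD with rfl | hD
    · exact .inr rfl
    · exact absurd hD (hP.notMem_erase_of_mem hC hi hiD)
  have hout : ∀ D ∈ splitBlock P C S, ∀ i ∈ D, i ∉ C → D ∈ P := fun D hD i hiD hi => by
    rcases Finset.mem_insert.1 hD with rfl | hD
    · exact absurd (hS hiD) hi
    rcases Finset.mem_insert.1 hD with rfl | hD
    · exact absurd (Finset.sdiff_subset hiD) hi
    · exact Finset.mem_of_mem_erase hD
  refine .of_exists_mem (fun D hD => ?_) (fun i => ?_) fun D hD D' hD' i hiD hiD' => ?_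
  · rcases Finset.mem_insert.1 hD with rfl | hD
    · exact hSne
    rcases Finset.mem_insert.1 hD with rfl | hD
    · exact hCS
    · exact hP.1 D (Finset.mem_of_mem_erase hD)
  · obtain ⟨D, hD, hiD⟩ := hP.exists_mem i
    by_cases hDC : D = C
    · subst hDC
      by_cases hiS : i ∈ S
      · exact ⟨S, Finset.mem_insert_self _ _, hiS⟩
      · exact ⟨D \ S, Finset.mem_insert_of_mem (Finset.mem_insert_self _ _),
          Finset.mem_sdiff.2 ⟨hiD, hiS⟩⟩
    · exact ⟨D, Finset.mem_insert_of_mem (Finset.mem_insert_of_mem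
        (Finset.mem_erase.2 ⟨hDC, hD⟩)), hiD⟩
  · by_cases hi : i ∈ C
    · have key : ∀ E ∈ splitBlock P C S, i ∈ E → E = if i ∈ S then S else C \ S :=
        fun E hE hiE => by
          rcases hin E hE i hiE hi with rfl | rfl
          · simp [hiE]
          · simp [(Finset.mem_sdiff.1 hiE).2]
      rw [key D hD hiD, key D' hD' hiD']
    · exact hP.eq_of_mem (hout D hD i hiD hi) (hout D' hD' i hiD' hi) hiD hiD'

theorem IsSetPartition.mergeBlocks_splitBlock (hP : IsSetPartition P) (hC : C ∈ P) (hS : S ⊆ C)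
    (hSne : S.Nonempty) : mergeBlocks (splitBlock P C S) S (C \ S) = P := by
  obtain ⟨i, hi⟩ := hSne
  have hS' : S ∉ insert (C \ S) (P.erase C) := by
    rw [Finset.mem_insert, not_or]
    exact ⟨fun h => (Finset.mem_sdiff.1 (h ▸ hi)).2 hi, hP.notMem_erase_of_mem hC (hS hi) hi⟩
  have hCS : C \ S ∉ P.erase C := fun h =>
    let ⟨j, hj⟩ := hP.1 _ (Finset.mem_of_mem_erase h)
    hP.notMem_erase_of_mem hC (Finset.sdiff_subset hj) hj h
  rw [mergeBlocks, splitBlock, Finset.erase_insert hS', Finset.erase_insert hCS,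
    Finset.union_sdiff_of_subset hS, Finset.insert_erase hC]

theorem IsSetPartition.notMem_mergeBlocks (hP : IsSetPartition P) (hA : A ∈ P)
    (hB : B ∈ P.erase A) : A ∉ mergeBlocks P A B := by
  rw [mergeBlocks, Finset.mem_insert, not_or]
  refine ⟨fun h => ?_, fun h => Finset.ne_of_mem_erase (Finset.mem_of_mem_erase h) rfl⟩
  obtain ⟨i, hi⟩ := hP.1 B (Finset.mem_of_mem_erase hB)
  exact Finset.ne_of_mem_erase hB (hP.eq_of_mem (Finset.mem_of_mem_erase hB) hA hi
    (h ▸ Finset.mem_union_right _ hi))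

theorem IsSetPartition.mergeBlocks_inj {P' : Finset (Finset ι)} {B' : Finset ι}
    (hP : IsSetPartition P) (hP' : IsSetPartition P') (hA : A ∈ P) (hA' : A ∈ P')
    (hB : B ∈ P.erase A) (hB' : B' ∈ P'.erase A) (h : mergeBlocks P A B = mergeBlocks P' A B') :
    P = P' ∧ B = B' := by
  obtain ⟨i, hi⟩ := hP.1 A hA
  have hU : A ∪ B = A ∪ B' :=
    (hP.merge hA (Finset.mem_of_mem_erase hB)).eq_of_mem (Finset.mem_insert_self _ _)
      (h ▸ Finset.mem_insert_self _ _) (Finset.mem_union_left _ hi) (Finset.mem_union_left _ hi)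
  obtain rfl : B = B' := by
    rw [← Finset.union_sdiff_cancel_left (hP.disjoint hA (Finset.mem_of_mem_erase hB)
        (Finset.ne_of_mem_erase hB).symm), hU,
      Finset.union_sdiff_cancel_left (hP'.disjoint hA' (Finset.mem_of_mem_erase hB')
        (Finset.ne_of_mem_erase hB').symm)]
  refine ⟨?_, rfl⟩
  rw [← hP.insert_insert_erase_mergeBlocks hA hB, ← hP'.insert_insert_erase_mergeBlocks hA' hB']
  exact congrArg (fun R => insert A (insert B (R.erase (A ∪ B)))) h

/-- Merging `{a, b}` into another block is a bijection onto the partitions in which `{a, b}` is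
a proper subset of a block. -/
theorem sum_sigma_mergeBlocks (F : Finset (Finset ι) → ℝ) :
    ∑ x ∈ (((setPartitions ι).filter (SameBlock · a b)).filter ({a, b} ∈ ·)).sigma
        (·.erase {a, b}), F (mergeBlocks x.1 {a, b} x.2) =
      ∑ P ∈ ((setPartitions ι).filter (SameBlock · a b)).filter ({a, b} ∉ ·), F P := by
  set ab : Finset ι := {a, b}
  have haab : a ∈ ab := Finset.mem_insert_self a {b}
  have hsame : ∀ {P : Finset (Finset ι)} {A}, A ∈ P → ab ⊆ A → SameBlock P a b :=
    fun hA h => ⟨_, hA, h haab, h (by simp [ab])⟩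
  refine Finset.sum_bij (fun x _ => mergeBlocks x.1 ab x.2) (fun ⟨Q, B⟩ hx => ?_)
    (fun ⟨Q, B⟩ hx ⟨Q', B'⟩ hx' h => ?_) (fun P hP => ?_) fun _ _ => rfl
  · simp only [Finset.mem_sigma, Finset.mem_filter, mem_setPartitions] at hx ⊢
    obtain ⟨⟨⟨hQ, -⟩, habQ⟩, hB⟩ := hx
    exact ⟨⟨hQ.merge habQ (Finset.mem_of_mem_erase hB),
      hsame (Finset.mem_insert_self _ _) Finset.subset_union_left⟩, hQ.notMem_mergeBlocks habQ hB⟩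
  · simp only [Finset.mem_sigma, Finset.mem_filter, mem_setPartitions] at hx hx'
    obtain ⟨⟨⟨hQ, -⟩, habQ⟩, hB⟩ := hx
    obtain ⟨⟨⟨hQ', -⟩, habQ'⟩, hB'⟩ := hx'
    obtain ⟨rfl, rfl⟩ := hQ.mergeBlocks_inj hQ' habQ habQ' hB hB' h
    rfl
  · simp only [Finset.mem_filter, mem_setPartitions] at hP
    obtain ⟨⟨hP, A₀, hA₀, ha, hb⟩, habP⟩ := hP
    have hsub : ab ⊆ A₀ := Finset.insert_subset ha (Finset.singleton_subset_iff.2 hb)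
    have hne : (A₀ \ ab).Nonempty :=
      Finset.sdiff_nonempty.2 fun h => habP (Finset.Subset.antisymm h hsub ▸ hA₀)
    have hrest : A₀ \ ab ≠ ab := fun h => (Finset.mem_sdiff.1 (h ▸ haab)).2 haab
    refine ⟨⟨splitBlock P A₀ ab, A₀ \ ab⟩, ?_, hP.mergeBlocks_splitBlock hA₀ hsub ⟨a, haab⟩⟩
    simp only [Finset.mem_sigma, Finset.mem_filter, mem_setPartitions]
    exact ⟨⟨⟨hP.split hA₀ hsub ⟨a, haab⟩ hne,
      hsame (Finset.mem_insert_self _ _) subset_rfl⟩, Finset.mem_insert_self _ _⟩,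
      Finset.mem_erase.2 ⟨hrest, Finset.mem_insert_of_mem (Finset.mem_insert_self _ _)⟩⟩

end Partitions

section CumulantSum

variable {Ω ι : Type*} [MeasurableSpace Ω] {a b : ι}

/-- The Möbius function `μ(π, 1̂) = (-1)^(k-1) (k-1)!` of the partition lattice, for `#π = k`. -/
def cumulantCoeff (k : ℕ) : ℝ :=
  (-1 : ℝ) ^ (k - 1) * ((k - 1).factorial : ℝ)

theorem cumulantCoeff_add_mul {k : ℕ} (hk : 2 ≤ k) :
    cumulantCoeff k + (k - 1 : ℕ) * cumulantCoeff (k - 1) = 0 := by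
  obtain ⟨r, rfl⟩ := Nat.exists_eq_add_of_le hk
  simp only [cumulantCoeff, show 2 + r - 1 = r + 1 by omega, Nat.factorial_succ, pow_succ]
  push_cast
  ring

def cumulantSum (μ : Measure Ω) (T : Finset (Finset (Finset ι))) (ξ : ι → Ω → ℝ) : ℝ :=
  ∑ P ∈ T, cumulantCoeff P.card * momProd μ P ξ

theorem cumulantSum_filter_add_filter_not (μ : Measure Ω)
    (T : Finset (Finset (Finset ι))) (p : Finset (Finset ι) → Prop) [DecidablePred p]
    (ξ : ι → Ω → ℝ) :
    cumulantSum μ (T.filter p) ξ + cumulantSum μ (T.filter (¬p ·)) ξ = cumulantSum μ T ξ :=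
  Finset.sum_filter_add_sum_filter_not T p _

variable [Fintype ι]

theorem jointCumulant_eq_cumulantSum (μ : Measure Ω) (ξ : ι → Ω → ℝ) :
    jointCumulant μ ξ = cumulantSum μ (setPartitions ι) ξ :=
  rfl

theorem momProd_update {μ : Measure Ω} {P : Finset (Finset ι)} (hP : IsSetPartition P)
    {A₀ : Finset ι} (hA₀ : A₀ ∈ P) {α : ι} (hα : α ∈ A₀) (ξ : ι → Ω → ℝ) (f : Ω → ℝ) :
    momProd μ P (Function.update ξ α f) =
      (∏ A ∈ P.erase A₀, ∫ ω, ∏ i ∈ A, ξ i ω ∂μ) * ∫ ω, f ω * ∏ i ∈ A₀.erase α, ξ i ω ∂μ := by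
  rw [momProd, ← Finset.mul_prod_erase P _ hA₀, mul_comm]
  simp only [Finset.prod_update_apply_of_mem hα]
  congr 1
  refine Finset.prod_congr rfl fun A hA => ?_
  simp only [Finset.prod_update_apply_of_notMem fun h => hP.notMem_erase_of_mem hA₀ hα h hA]

theorem exists_cumulantSum_update_eq_integral [Finite Ω] [MeasurableSingletonClass Ω]
    {μ : Measure Ω} [IsFiniteMeasure μ] {T : Finset (Finset (Finset ι))}
    (hT : ∀ P ∈ T, IsSetPartition P) {α : ι} {ξ : ι → Ω → ℝ} {S : Subalgebra ℝ (Ω → ℝ)}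
    (hS : BlockmatesIn T α ξ S) :
    ∃ W ∈ S, ∀ f : Ω → ℝ, cumulantSum μ T (Function.update ξ α f) = ∫ ω, f ω * W ω ∂μ := by
  have hblock : ∀ P, ∃ A : Finset ι, P ∈ T → A ∈ P ∧ α ∈ A := fun P => by
    by_cases hP : P ∈ T
    · obtain ⟨A, hA, hαA⟩ := (hT P hP).exists_mem α
      exact ⟨A, fun _ => ⟨hA, hαA⟩⟩
    · exact ⟨∅, fun h => absurd h hP⟩
  choose B hB using hblock
  refine ⟨∑ P ∈ T, (cumulantCoeff P.card * ∏ A ∈ P.erase (B P), ∫ ω, ∏ i ∈ A, ξ i ω ∂μ) •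
      ∏ i ∈ (B P).erase α, ξ i, ?_, fun f => ?_⟩
  · refine Subalgebra.sum_mem _ fun P hP => Subalgebra.smul_mem _ (Subalgebra.prod_mem _
      fun i hi => hS P hP (B P) (hB P hP).1 (hB P hP).2 i (Finset.mem_of_mem_erase hi)
        (Finset.ne_of_mem_erase hi)) _
  · simp only [Finset.sum_apply, Pi.smul_apply, Finset.prod_apply, smul_eq_mul, Finset.mul_sum]
    rw [integral_finsetSum _ fun _ _ => Integrable.of_finite, cumulantSum]
    refine Finset.sum_congr rfl fun P hP => ?_
    rw [momProd_update (hT P hP) (hB P hP).1 (hB P hP).2, ← integral_const_mul]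
    simp only [← integral_const_mul]
    congr 1
    funext ω
    ring

def cumulantBound (ι : Type*) [Fintype ι] (M : ℝ) : ℝ :=
  (∑ P : Finset (Finset ι), ((P.card - 1).factorial : ℝ)) * M ^ Fintype.card ι

theorem abs_momProd_le {μ : Measure Ω} [IsProbabilityMeasure μ] {P : Finset (Finset ι)}
    (hP : IsSetPartition P) {ξ : ι → Ω → ℝ} {M : ℝ} (hξ : ∀ i ω, |ξ i ω| ≤ M) :
    |momProd μ P ξ| ≤ M ^ Fintype.card ι := by
  rw [momProd, Finset.abs_prod, ← hP.sum_card, ← Finset.prod_pow_eq_pow_sum]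
  refine Finset.prod_le_prod (fun _ _ => abs_nonneg _) fun A _ => ?_
  have hA : ∀ ω, ‖∏ i ∈ A, ξ i ω‖ ≤ M ^ A.card := fun ω => by
    rw [Real.norm_eq_abs, Finset.abs_prod, ← Finset.prod_const]
    exact Finset.prod_le_prod (fun _ _ => abs_nonneg _) fun i _ => hξ i ω
  simpa using norm_integral_le_of_norm_le_const (μ := μ) (Filter.Eventually.of_forall hA)

theorem abs_cumulantSum_le {μ : Measure Ω} [IsProbabilityMeasure μ]
    {T : Finset (Finset (Finset ι))} (hT : ∀ P ∈ T, IsSetPartition P) {ξ : ι → Ω → ℝ} {M : ℝ}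
    (hM : 0 ≤ M) (hξ : ∀ i ω, |ξ i ω| ≤ M) : |cumulantSum μ T ξ| ≤ cumulantBound ι M := by
  rw [cumulantBound, Finset.sum_mul]
  refine (Finset.abs_sum_le_sum_abs _ _).trans <| (Finset.sum_le_sum fun P hP => ?_).trans <|
    Finset.sum_le_sum_of_subset_of_nonneg (Finset.subset_univ T) fun _ _ _ => by positivity
  rw [abs_mul, cumulantCoeff, abs_mul, abs_pow, abs_neg, abs_one, one_pow, one_mul, Nat.abs_cast]
  exact mul_le_mul_of_nonneg_left (abs_momProd_le (hT P hP) hξ) (by positivity)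

theorem cumulantBound_nonneg (ι : Type*) [Fintype ι] {M : ℝ} (hM : 0 ≤ M) :
    0 ≤ cumulantBound ι M := by
  unfold cumulantBound
  positivity

theorem cumulantSum_update_update_mul (μ : Measure Ω) {T : Finset (Finset (Finset ι))}
    (hT : ∀ P ∈ T, IsSetPartition P ∧ SameBlock P a b) (hab : a ≠ b) (ξ : ι → Ω → ℝ) :
    cumulantSum μ T (Function.update (Function.update ξ a 1) b (ξ a * ξ b)) =
      cumulantSum μ T ξ := by
  refine Finset.sum_congr rfl fun P hP => ?_
  obtain ⟨hPart, A₀, hA₀, haA₀, hbA₀⟩ := hT P hP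
  have hiff : ∀ A ∈ P, (a ∈ A ↔ b ∈ A) := fun A hA =>
    ⟨fun ha => hPart.eq_of_mem hA₀ hA haA₀ ha ▸ hbA₀,
      fun hb => hPart.eq_of_mem hA₀ hA hbA₀ hb ▸ haA₀⟩
  congr 1
  exact Finset.prod_congr rfl fun A hA => by simp only [prod_update_update_mul hab (hiff A hA)]

theorem cumulantSum_sameBlock_eq_zero {μ : Measure Ω} [IsProbabilityMeasure μ] {x : ι}
    (hxa : x ≠ a) (hxb : x ≠ b) {ξ : ι → Ω → ℝ} (ha : ξ a = 1) (hb : ξ b = 1) :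
    cumulantSum μ ((setPartitions ι).filter (SameBlock · a b)) ξ = 0 := by
  set ab : Finset ι := {a, b}
  have hprod : ∀ B, Disjoint ab B → ∀ ω, ∏ i ∈ ab ∪ B, ξ i ω = ∏ i ∈ B, ξ i ω := fun B hB ω => by
    simp [ha, hb, ab]
  have hmerge : ∀ Q ∈ ((setPartitions ι).filter (SameBlock · a b)).filter (ab ∈ ·),
      ∀ B ∈ Q.erase ab, cumulantCoeff (mergeBlocks Q ab B).card * momProd μ (mergeBlocks Q ab B) ξ =
        cumulantCoeff (Q.card - 1) * momProd μ Q ξ := fun Q hQ B hB => by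
    simp only [Finset.mem_filter, mem_setPartitions] at hQ
    obtain ⟨⟨hQ, -⟩, habQ⟩ := hQ
    have hdisj := hQ.disjoint habQ (Finset.mem_of_mem_erase hB) (Finset.ne_of_mem_erase hB).symm
    rw [hQ.card_mergeBlocks habQ (Finset.mem_of_mem_erase hB) (Finset.ne_of_mem_erase hB).symm,
      momProd, momProd, mergeBlocks, Finset.prod_insert (hQ.union_notMem_erase_erase habQ),
      ← Finset.mul_prod_erase Q _ habQ, ← Finset.mul_prod_erase (Q.erase ab) _ hB]
    simp only [hprod B hdisj, by simpa using hprod ∅ (Finset.disjoint_empty_right ab)]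
    simp
  rw [cumulantSum, ← Finset.sum_filter_add_sum_filter_not _ (ab ∈ ·), ← sum_sigma_mergeBlocks,
    Finset.sum_sigma, ← Finset.sum_add_distrib]
  refine Finset.sum_eq_zero fun Q hQ => ?_
  rw [Finset.sum_congr rfl (hmerge Q hQ)]
  simp only [Finset.mem_filter, mem_setPartitions] at hQ
  obtain ⟨⟨hQ, -⟩, habQ⟩ := hQ
  obtain ⟨X, hX, hxX⟩ := hQ.exists_mem x
  have h2 : 2 ≤ Q.card := Finset.one_lt_card.2 ⟨ab, habQ, X, hX, fun h => by
    simp [ab, ← h, hxa, hxb] at hxX⟩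
  rw [Finset.sum_const, Finset.card_erase_of_mem habQ, nsmul_eq_mul, ← mul_assoc, ← add_mul,
    cumulantCoeff_add_mul h2, zero_mul]

end CumulantSum

section Permutations

variable {n : ℕ}

instance : IsProbabilityMeasure (permMeasure n) := by
  unfold permMeasure
  infer_instance

theorem integral_permMeasure (f : Equiv.Perm (Fin n) → ℝ) :
    ∫ σ, f σ ∂permMeasure n = (∑ σ, f σ) / Fintype.card (Equiv.Perm (Fin n)) := by
  simp [permMeasure, PMF.integral_eq_sum, Finset.mul_sum, div_eq_inv_mul]

theorem integral_permMeasure_comp_mul_right (τ : Equiv.Perm (Fin n))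
    (f : Equiv.Perm (Fin n) → ℝ) : ∫ σ, f (σ * τ) ∂permMeasure n = ∫ σ, f σ ∂permMeasure n := by
  simp only [integral_permMeasure]
  exact congrArg (· / _) (Equiv.sum_comp (Equiv.mulRight τ) f)

def coordSubalgebra (n : ℕ) (I : Finset (Fin n)) : Subalgebra ℝ (Equiv.Perm (Fin n) → ℝ) where
  carrier := {F | ∀ σ τ : Equiv.Perm (Fin n), (∀ i ∈ I, σ i = τ i) → F σ = F τ}
  mul_mem' hF hG σ τ h := by simp only [Pi.mul_apply, hF σ τ h, hG σ τ h]
  add_mem' hF hG σ τ h := by simp only [Pi.add_apply, hF σ τ h, hG σ τ h]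
  algebraMap_mem' _ _ _ _ := rfl

theorem coordSubalgebra_mono {I J : Finset (Fin n)} (h : I ⊆ J) :
    coordSubalgebra n I ≤ coordSubalgebra n J :=
  fun _ hF σ τ hστ => hF σ τ fun i hi => hστ i (h hi)

theorem comp_apply_mem_coordSubalgebra {I : Finset (Fin n)} {i : Fin n} (hi : i ∈ I)
    (g : Fin n → ℝ) : (fun σ : Equiv.Perm (Fin n) => g (σ i)) ∈ coordSubalgebra n I :=
  fun σ τ h => by simp only [h i hi]

theorem integral_comp_apply_mul_eq {I : Finset (Fin n)} {F : Equiv.Perm (Fin n) → ℝ}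
    (hF : F ∈ coordSubalgebra n I) {j k : Fin n} (hj : j ∉ I) (hk : k ∉ I) (g : Fin n → ℝ) :
    ∫ σ, g (σ k) * F σ ∂permMeasure n = ∫ σ, g (σ j) * F σ ∂permMeasure n := by
  rw [← integral_permMeasure_comp_mul_right (Equiv.swap k j)]
  refine integral_congr_ae (Filter.Eventually.of_forall fun σ => ?_)
  have hFσ : F (σ * Equiv.swap k j) = F σ := hF _ _ fun i hi => by
    rw [Equiv.Perm.mul_apply, Equiv.swap_apply_of_ne_of_ne (ne_of_mem_of_not_mem hi hk)
      (ne_of_mem_of_not_mem hi hj)]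
  simp [hFσ]

theorem sum_integral_comp_apply_mul (F : Equiv.Perm (Fin n) → ℝ) (g : Fin n → ℝ) :
    ∑ k, ∫ σ, g (σ k) * F σ ∂permMeasure n = (∑ q, g q) * ∫ σ, F σ ∂permMeasure n := by
  rw [← integral_finsetSum _ fun _ _ => Integrable.of_finite, ← integral_const_mul]
  simp only [← Finset.sum_mul, Equiv.sum_comp]

/-- Exchangeability of the uniform permutation: given the values `σ i`, `i ∈ I`, the value `σ j`
is uniform on the remaining `n - #I` ranks. -/
theorem integral_comp_apply_mul_eq_sub {I : Finset (Fin n)} {F : Equiv.Perm (Fin n) → ℝ}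
    (hF : F ∈ coordSubalgebra n I) {j : Fin n} (hj : j ∉ I) (g : Fin n → ℝ) :
    ((n : ℝ) - I.card) * ∫ σ, g (σ j) * F σ ∂permMeasure n =
      (∑ q, g q) * ∫ σ, F σ ∂permMeasure n - ∑ i ∈ I, ∫ σ, g (σ i) * F σ ∂permMeasure n := by
  rw [← sum_integral_comp_apply_mul, ← Finset.sum_add_sum_compl I, add_sub_cancel_left,
    Finset.sum_congr rfl fun k hk => integral_comp_apply_mul_eq hF hj (Finset.mem_compl.1 hk) g,
    Finset.sum_const, Finset.card_compl, Fintype.card_fin, nsmul_eq_mul,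
    Nat.cast_sub (I.card_le_univ.trans_eq (Fintype.card_fin n))]

end Permutations

section Replacement

variable {ι : Type*} [Fintype ι] {n : ℕ} {T : Finset (Finset (Finset ι))} {α : ι}
  {ξ : ι → Equiv.Perm (Fin n) → ℝ} {I : Finset (Fin n)} {j : Fin n}

theorem cumulantSum_update_comp_apply (hT : ∀ P ∈ T, IsSetPartition P)
    (hS : BlockmatesIn T α ξ (coordSubalgebra n I)) (hj : j ∉ I) (g : Fin n → ℝ) :
    ((n : ℝ) - I.card) * cumulantSum (permMeasure n) T (Function.update ξ α fun σ => g (σ j)) =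
      (∑ q, g q) * cumulantSum (permMeasure n) T (Function.update ξ α 1) -
        ∑ i ∈ I, cumulantSum (permMeasure n) T (Function.update ξ α fun σ => g (σ i)) := by
  obtain ⟨W, hW, hκ⟩ := exists_cumulantSum_update_eq_integral (μ := permMeasure n) hT hS
  simpa only [hκ, Pi.one_apply, one_mul] using integral_comp_apply_mul_eq_sub hW hj g

theorem abs_cumulantSum_update_comp_apply_le (hT : ∀ P ∈ T, IsSetPartition P)
    (hS : BlockmatesIn T α ξ (coordSubalgebra n I)) (hj : j ∉ I) (g : Fin n → ℝ)
    (hg : (∑ q, g q) * cumulantSum (permMeasure n) T (Function.update ξ α 1) = 0) {δ : ℝ}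
    (hδ : ∀ i ∈ I,
      |cumulantSum (permMeasure n) T (Function.update ξ α fun σ => g (σ i))| ≤ δ) :
    ((n : ℝ) - I.card) *
        |cumulantSum (permMeasure n) T (Function.update ξ α fun σ => g (σ j))| ≤ I.card * δ := by
  have hI : (I.card : ℝ) ≤ n := by exact_mod_cast I.card_le_univ.trans_eq (Fintype.card_fin n)
  rw [← abs_of_nonneg (sub_nonneg.2 hI), ← abs_mul, cumulantSum_update_comp_apply hT hS hj g, hg,
    zero_sub, abs_neg]
  exact (Finset.abs_sum_le_sum_abs _ _).trans (by simpa using Finset.sum_le_card_nsmul I _ δ hδ)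

end Replacement

section Ranks

variable {n : ℕ}

/-- The value of `Z_i` at `Q_i = q + 1`: `Zr n i σ` unfolds to `rankScore n (σ i)`. -/
def rankScore (n : ℕ) (q : Fin n) : ℝ :=
  √(12 / ((n : ℝ) ^ 2 - 1)) * ((q : ℕ) + 1 - ((n : ℝ) + 1) / 2)

theorem sum_range_cast (m : ℕ) : ∑ i ∈ Finset.range m, (i : ℝ) = m * (m - 1) / 2 := by
  induction m with
  | zero => simp
  | succ k ih => rw [Finset.sum_range_succ, ih]; push_cast; ring

theorem sum_range_cast_sq (m : ℕ) :
    ∑ i ∈ Finset.range m, (i : ℝ) ^ 2 = m * (m - 1) * (2 * m - 1) / 6 := by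
  induction m with
  | zero => simp
  | succ k ih => rw [Finset.sum_range_succ, ih]; push_cast; ring

theorem sum_rankScore (n : ℕ) : ∑ q, rankScore n q = 0 := by
  simp only [rankScore, ← Finset.mul_sum]
  rw [Fin.sum_univ_eq_sum_range (fun i => (i : ℝ) + 1 - ((n : ℝ) + 1) / 2) n,
    Finset.sum_sub_distrib, Finset.sum_add_distrib, sum_range_cast]
  simp only [Finset.sum_const, Finset.card_range, nsmul_eq_mul]
  ring

theorem sum_sq_rank_sub_mean (n : ℕ) :
    ∑ q : Fin n, (((q : ℕ) : ℝ) + 1 - ((n : ℝ) + 1) / 2) ^ 2 = n * ((n : ℝ) ^ 2 - 1) / 12 := by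
  rw [Fin.sum_univ_eq_sum_range (fun i => ((i : ℝ) + 1 - ((n : ℝ) + 1) / 2) ^ 2) n]
  have hexp : ∀ i : ℕ, ((i : ℝ) + 1 - ((n : ℝ) + 1) / 2) ^ 2 =
      (i : ℝ) ^ 2 + (1 - n) * i + ((1 - n) / 2) ^ 2 := fun i => by ring
  simp only [hexp, Finset.sum_add_distrib, ← Finset.mul_sum, sum_range_cast_sq, sum_range_cast,
    Finset.sum_const, Finset.card_range, nsmul_eq_mul]
  ring

theorem sum_rankScore_mul_self (hn : 2 ≤ n) : ∑ q, rankScore n q * rankScore n q = n := by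
  have hn' : (2 : ℝ) ≤ n := by exact_mod_cast hn
  have hpos : (0 : ℝ) < (n : ℝ) ^ 2 - 1 := by nlinarith
  have hterm : ∀ q : Fin n, rankScore n q * rankScore n q =
      12 / ((n : ℝ) ^ 2 - 1) * (((q : ℕ) : ℝ) + 1 - ((n : ℝ) + 1) / 2) ^ 2 := fun q => by
    rw [rankScore, mul_mul_mul_comm, Real.mul_self_sqrt (div_nonneg (by norm_num) hpos.le)]
    ring
  rw [Finset.sum_congr rfl fun q _ => hterm q, ← Finset.mul_sum, sum_sq_rank_sub_mean]
  field_simp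

theorem abs_rankScore_le (q : Fin n) : |rankScore n q| ≤ 2 := by
  have hq : ((q : ℕ) : ℝ) + 1 ≤ n := by exact_mod_cast q.isLt
  have hq0 : (0 : ℝ) ≤ (q : ℕ) := Nat.cast_nonneg _
  refine abs_le_of_sq_le_sq ?_ (by norm_num)
  rw [rankScore, mul_pow, Real.sq_sqrt (div_nonneg (by norm_num) (by nlinarith)),
    div_mul_eq_mul_div]
  refine div_le_of_le_mul₀ (by nlinarith) (by norm_num) ?_
  nlinarith [mul_nonneg hq0 (sub_nonneg.2 hq)]

theorem abs_Zr_le (n : ℕ) (i : Fin n) (σ : Equiv.Perm (Fin n)) : |Zr n i σ| ≤ 2 :=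
  abs_rankScore_le (σ i)

theorem Zr_mem_coordSubalgebra {I : Finset (Fin n)} {i : Fin n} (hi : i ∈ I) :
    Zr n i ∈ coordSubalgebra n I :=
  comp_apply_mem_coordSubalgebra hi (rankScore n)

theorem integral_Zr_mul_self (hn : 2 ≤ n) (v : Fin n) :
    ∫ σ, Zr n v σ * Zr n v σ ∂permMeasure n = 1 := by
  have h := integral_comp_apply_mul_eq_sub (Subalgebra.one_mem (coordSubalgebra n ∅))
    (Finset.notMem_empty v) fun q => rankScore n q * rankScore n q
  simp only [Pi.one_apply, mul_one, Finset.card_empty, Nat.cast_zero, sub_zero,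
    Finset.sum_empty, sum_rankScore_mul_self hn, integral_const, probReal_univ, smul_eq_mul] at h
  exact mul_left_cancel₀ (by positivity) (h.trans (mul_one _).symm)

theorem integral_Zr_mul_of_ne (hn : 2 ≤ n) {v w : Fin n} (hvw : v ≠ w) :
    ∫ σ, Zr n v σ * Zr n w σ ∂permMeasure n = -1 / ((n : ℝ) - 1) := by
  have h : ((n : ℝ) - 1) * ∫ σ, Zr n v σ * Zr n w σ ∂permMeasure n =
      -∫ σ, Zr n v σ * Zr n v σ ∂permMeasure n := by
    have h₀ := integral_comp_apply_mul_eq_sub (comp_apply_mem_coordSubalgebra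
      (Finset.mem_singleton_self v) (rankScore n)) (Finset.notMem_singleton.2 hvw.symm)
      (rankScore n)
    simp only [Finset.card_singleton, Nat.cast_one, Finset.sum_singleton, sum_rankScore,
      zero_mul, zero_sub] at h₀
    simp_rw [mul_comm (Zr n v _) (Zr n w _)]
    exact h₀
  have hn' : (2 : ℝ) ≤ n := by exact_mod_cast hn
  rw [integral_Zr_mul_self hn v] at h
  rw [eq_div_iff (by linarith), mul_comm, h]

end Ranks

theorem mul_le_two_mul_of_mul_le {t c y A : ℝ} (hc : t ≤ 2 * c) (hy : 0 ≤ y) (h : c * y ≤ A) :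
    t * y ≤ 2 * A := by
  nlinarith

section Estimates

variable {ι : Type*} [Fintype ι] {a b x : ι} {n m : ℕ} {L : Finset (Fin n)}
  {ξ : ι → Equiv.Perm (Fin n) → ℝ}

theorem abs_cumulantSum_update_Zr_le_of_mem {T : Finset (Finset (Finset ι))}
    (hT : ∀ P ∈ T, IsSetPartition P) (hab : a ≠ b) {i j : Fin n} (hi : i ∈ L) (hjL : j ∉ L)
    (hξb : ξ b = Zr n j) (hL : ∀ β, β ≠ a → β ≠ b → ξ β ∈ coordSubalgebra n L)
    (hξ : ∀ i σ, |ξ i σ| ≤ 2) :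
    ((n : ℝ) - L.card) * |cumulantSum (permMeasure n) T (Function.update ξ a (Zr n i))| ≤
      L.card * cumulantBound ι 4 := by
  have hζ : Function.update (Function.update ξ a (Zr n i)) b (Zr n j) =
      Function.update ξ a (Zr n i) :=
    Function.update_eq_self_iff.2 (by rw [Function.update_of_ne hab.symm, hξb])
  have hS : BlockmatesIn T b (Function.update ξ a (Zr n i)) (coordSubalgebra n L) :=
    .of_forall fun β hβb => by
      rcases eq_or_ne β a with rfl | hβa
      · rw [Function.update_self]
        exact Zr_mem_coordSubalgebra hi
      · rw [Function.update_of_ne hβa]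
        exact hL β hβa hβb
  have hZ : ∀ k σ, |Zr n k σ| ≤ 4 := fun k σ => (abs_Zr_le n k σ).trans (by norm_num)
  rw [← hζ]
  exact abs_cumulantSum_update_comp_apply_le hT hS hjL (rankScore n)
    (by rw [sum_rankScore, zero_mul]) fun k _ => abs_cumulantSum_le hT (by norm_num)
      (abs_update_le (abs_update_le (fun i σ => (hξ i σ).trans (by norm_num)) (hZ i)) (hZ k))

theorem abs_cumulantSum_not_sameBlock_le (hab : a ≠ b) {j : Fin n} (hjL : j ∉ L)
    (hξa : ξ a = Zr n j) (hξb : ξ b = Zr n j)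
    (hL : ∀ β, β ≠ a → β ≠ b → ξ β ∈ coordSubalgebra n L) (hξ : ∀ i σ, |ξ i σ| ≤ 2) :
    ((n : ℝ) - L.card) ^ 2 *
        |cumulantSum (permMeasure n) ((setPartitions ι).filter (¬SameBlock · a b)) ξ| ≤
      L.card ^ 2 * cumulantBound ι 4 := by
  set T := (setPartitions ι).filter (¬SameBlock · a b)
  have hT : ∀ P ∈ T, IsSetPartition P := fun P hP =>
    mem_setPartitions.1 (Finset.mem_of_mem_filter P hP)
  have hc : (0 : ℝ) < n - L.card := by
    have := Finset.card_lt_univ_of_notMem hjL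
    rw [Fintype.card_fin] at this
    exact sub_pos.2 (by exact_mod_cast this)
  have hS : BlockmatesIn T a ξ (coordSubalgebra n L) := fun P hP A hA haA β hβA hβa =>
    hL β hβa fun hβb => (Finset.mem_filter.1 hP).2 ⟨A, hA, haA, hβb ▸ hβA⟩
  have h := abs_cumulantSum_update_comp_apply_le hT hS hjL (rankScore n)
    (by rw [sum_rankScore, zero_mul]) (δ := L.card * cumulantBound ι 4 / (n - L.card))
    fun i hi => by
      rw [le_div_iff₀ hc, mul_comm]
      exact abs_cumulantSum_update_Zr_le_of_mem hT hab hi hjL hξb hL hξ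
  rw [Function.update_eq_self_iff.2 hξa.symm] at h
  calc ((n : ℝ) - L.card) ^ 2 * |cumulantSum (permMeasure n) T ξ|
      = (n - L.card) * ((n - L.card) * |cumulantSum (permMeasure n) T ξ|) := by ring
    _ ≤ (n - L.card) * (L.card * (L.card * cumulantBound ι 4 / (n - L.card))) :=
        mul_le_mul_of_nonneg_left h hc.le
    _ = L.card ^ 2 * cumulantBound ι 4 := by field_simp

theorem abs_cumulantSum_sameBlock_le (hab : a ≠ b) (hxa : x ≠ a) (hxb : x ≠ b) {j : Fin n}
    (hjL : j ∉ L) (hξa : ξ a = Zr n j) (hξb : ξ b = Zr n j)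
    (hL : ∀ β, β ≠ a → β ≠ b → ξ β ∈ coordSubalgebra n L) (hξ : ∀ i σ, |ξ i σ| ≤ 2) :
    ((n : ℝ) - L.card) *
        |cumulantSum (permMeasure n) ((setPartitions ι).filter (SameBlock · a b)) ξ| ≤
      L.card * cumulantBound ι 4 := by
  set T := (setPartitions ι).filter (SameBlock · a b)
  have hT : ∀ P ∈ T, IsSetPartition P ∧ SameBlock P a b := fun P hP => by
    simpa [T, mem_setPartitions] using hP
  have hS : BlockmatesIn T b (Function.update ξ a 1) (coordSubalgebra n L) :=
    .of_forall fun β hβb => by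
      rcases eq_or_ne β a with rfl | hβa
      · rw [Function.update_self]
        exact Subalgebra.one_mem _
      · rw [Function.update_of_ne hβa]
        exact hL β hβa hβb
  have hζ : ∀ i σ, |Function.update ξ a 1 i σ| ≤ 4 :=
    abs_update_le (fun i σ => (hξ i σ).trans (by norm_num)) fun _ => by norm_num
  have hvanish : cumulantSum (permMeasure n) T (Function.update (Function.update ξ a 1) b 1) = 0 :=
    cumulantSum_sameBlock_eq_zero hxa hxb
      (by rw [Function.update_of_ne hab, Function.update_self]) (Function.update_self _ _ _)
  rw [← cumulantSum_update_update_mul _ hT hab ξ, hξa, hξb]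
  exact abs_cumulantSum_update_comp_apply_le (fun P hP => (hT P hP).1) hS hjL
    (fun q => rankScore n q * rankScore n q) (by rw [hvanish, mul_zero])
    fun i _ => abs_cumulantSum_le (fun P hP => (hT P hP).1) (by norm_num)
      (abs_update_le hζ fun σ => by
        rw [abs_mul]
        nlinarith [abs_rankScore_le (σ i), abs_nonneg (rankScore n (σ i))])

theorem abs_jointCumulant_le_of_eq (hm : 2 * (m + 1) ≤ n) (hLm : L.card ≤ m) (hab : a ≠ b)
    (hxa : x ≠ a) (hxb : x ≠ b) {j : Fin n} (hjL : j ∉ L) (hξa : ξ a = Zr n j)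
    (hξb : ξ b = Zr n j) (hL : ∀ β, β ≠ a → β ≠ b → ξ β ∈ coordSubalgebra n L)
    (hξ : ∀ i σ, |ξ i σ| ≤ 2) :
    |jointCumulant (permMeasure n) ξ| ≤ 2 * (m + 1) ^ 2 * cumulantBound ι 4 / n := by
  have hglued := abs_cumulantSum_sameBlock_le hab hxa hxb hjL hξa hξb hL hξ
  have hsplit := abs_cumulantSum_not_sameBlock_le hab hjL hξa hξb hL hξ
  rw [jointCumulant_eq_cumulantSum,
    ← cumulantSum_filter_add_filter_not _ _ (SameBlock · a b)]
  have hK := cumulantBound_nonneg ι (M := 4) (by norm_num)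
  have hmn : (2 : ℝ) * (m + 1) ≤ n := by exact_mod_cast hm
  have hLm' : (L.card : ℝ) ≤ m := by exact_mod_cast hLm
  have hc : (n : ℝ) ≤ 2 * (n - L.card) := by linarith
  have hu := mul_le_two_mul_of_mul_le hc (abs_nonneg _) hglued
  set v := |cumulantSum (permMeasure n) ((setPartitions ι).filter (¬SameBlock · a b)) ξ|
  have hc1 : (1 : ℝ) ≤ n - L.card := by linarith [(Nat.cast_nonneg m : (0 : ℝ) ≤ m)]
  have hv := mul_le_two_mul_of_mul_le hc (abs_nonneg _)
    (le_trans (by nlinarith [mul_nonneg (mul_nonneg (by linarith : (0 : ℝ) ≤ n - L.card)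
      (sub_nonneg.2 hc1)) (abs_nonneg _ : 0 ≤ v)]) hsplit : ((n : ℝ) - L.card) * v ≤ _)
  have hLK : ((L.card : ℝ) + L.card ^ 2) * cumulantBound ι 4 ≤ (m + 1) ^ 2 * cumulantBound ι 4 :=
    mul_le_mul_of_nonneg_right (by nlinarith [(Nat.cast_nonneg L.card : (0 : ℝ) ≤ L.card)]) hK
  rw [le_div_iff₀ (by linarith), mul_comm]
  refine (mul_le_mul_of_nonneg_left (abs_add_le _ _) (by linarith)).trans ?_
  nlinarith

theorem abs_cumulantSum_update_Zr_le_of_mem_insert (hm : 2 * (m + 1) ≤ n) (hLm : L.card ≤ m)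
    (hab : a ≠ b) (hxa : x ≠ a) (hxb : x ≠ b) {h₁ i : Fin n} (h1L : h₁ ∉ L) (hi : i ∈ insert h₁ L)
    (hξb : ξ b = Zr n h₁) (hL : ∀ β, β ≠ a → β ≠ b → ξ β ∈ coordSubalgebra n L)
    (hξ : ∀ i σ, |ξ i σ| ≤ 2) :
    |cumulantSum (permMeasure n) (setPartitions ι) (Function.update ξ a (Zr n i))| ≤
      2 * (m + 1) ^ 2 * cumulantBound ι 4 / n := by
  rcases Finset.mem_insert.1 hi with rfl | hi
  · exact abs_jointCumulant_le_of_eq hm hLm hab hxa hxb h1L (Function.update_self _ _ _)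
      (by rw [Function.update_of_ne hab.symm, hξb])
      (fun β hβa hβb => by rw [Function.update_of_ne hβa]; exact hL β hβa hβb)
      (abs_update_le hξ (abs_Zr_le n i))
  have hK := cumulantBound_nonneg ι (M := 4) (by norm_num)
  have hmn : (2 : ℝ) * (m + 1) ≤ n := by exact_mod_cast hm
  have hLm' : (L.card : ℝ) ≤ m := by exact_mod_cast hLm
  rw [le_div_iff₀ (by linarith [(Nat.cast_nonneg m : (0 : ℝ) ≤ m)]), mul_comm]
  refine (mul_le_two_mul_of_mul_le (by linarith) (abs_nonneg _)
    (abs_cumulantSum_update_Zr_le_of_mem (fun P hP => mem_setPartitions.1 hP) hab hi h1L hξb hL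
      hξ)).trans ?_
  nlinarith [mul_le_mul_of_nonneg_right (hLm'.trans (by nlinarith) : (L.card : ℝ) ≤ (m + 1) ^ 2) hK]

theorem abs_jointCumulant_le_of_ne (hm : 2 * (m + 1) ≤ n) (hLm : L.card ≤ m) (hab : a ≠ b)
    (hxa : x ≠ a) (hxb : x ≠ b) {h₀ h₁ : Fin n} (h01 : h₀ ≠ h₁) (h0L : h₀ ∉ L) (h1L : h₁ ∉ L)
    (hξa : ξ a = Zr n h₀) (hξb : ξ b = Zr n h₁)
    (hL : ∀ β, β ≠ a → β ≠ b → ξ β ∈ coordSubalgebra n L) (hξ : ∀ i σ, |ξ i σ| ≤ 2) :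
    |jointCumulant (permMeasure n) ξ| ≤ 4 * (m + 1) ^ 3 * cumulantBound ι 4 / n ^ 2 := by
  have hmn : (2 : ℝ) * (m + 1) ≤ n := by exact_mod_cast hm
  have hLm' : (L.card : ℝ) ≤ m := by exact_mod_cast hLm
  have hn : (0 : ℝ) < n := by linarith [(Nat.cast_nonneg m : (0 : ℝ) ≤ m)]
  have hS : BlockmatesIn (setPartitions ι) a ξ (coordSubalgebra n (insert h₁ L)) :=
    .of_forall fun β hβa => by
      rcases eq_or_ne β b with rfl | hβb
      · exact hξb ▸ Zr_mem_coordSubalgebra (Finset.mem_insert_self h₁ L)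
      · exact coordSubalgebra_mono (Finset.subset_insert h₁ L) (hL β hβa hβb)
  have h := abs_cumulantSum_update_comp_apply_le (fun P hP => mem_setPartitions.1 hP) hS
    (show h₀ ∉ insert h₁ L by simp [h01, h0L]) (rankScore n) (by rw [sum_rankScore, zero_mul])
    fun i hi => abs_cumulantSum_update_Zr_le_of_mem_insert hm hLm hab hxa hxb h1L hi hξb hL hξ
  rw [Function.update_eq_self_iff.2 hξa.symm, Finset.card_insert_of_notMem h1L] at h
  push_cast at h
  have h' := mul_le_two_mul_of_mul_le (t := n) (h := h) (by linarith) (abs_nonneg _)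
  rw [jointCumulant_eq_cumulantSum, le_div_iff₀ (by positivity)]
  calc _ = n * (n * |cumulantSum (permMeasure n) (setPartitions ι) ξ|) := by ring
    _ ≤ n * (2 * ((L.card + 1) * (2 * (m + 1) ^ 2 * cumulantBound ι 4 / n))) :=
        mul_le_mul_of_nonneg_left h' hn.le
    _ = 2 * (L.card + 1) * (2 * (m + 1) ^ 2 * cumulantBound ι 4) := by field_simp
    _ ≤ 2 * (m + 1) * (2 * (m + 1) ^ 2 * cumulantBound ι 4) :=
        mul_le_mul_of_nonneg_right (by linarith)
          (mul_nonneg (by positivity) (cumulantBound_nonneg ι (by norm_num)))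
    _ = 4 * (m + 1) ^ 3 * cumulantBound ι 4 := by ring

theorem abs_jointCumulant_le (hm : 2 * (m + 1) ≤ n) (hLm : L.card ≤ m) (hab : a ≠ b)
    (hxa : x ≠ a) (hxb : x ≠ b) {h₀ h₁ : Fin n} (h0L : h₀ ∉ L) (h1L : h₁ ∉ L)
    (hξa : ξ a = Zr n h₀) (hξb : ξ b = Zr n h₁)
    (hL : ∀ β, β ≠ a → β ≠ b → ξ β ∈ coordSubalgebra n L) (hξ : ∀ i σ, |ξ i σ| ≤ 2) :
    |jointCumulant (permMeasure n) ξ| ≤ 4 * (m + 1) ^ 3 * cumulantBound ι 4 * (n : ℝ)⁻¹ *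
      |∫ σ, Zr n h₀ σ * Zr n h₁ σ ∂permMeasure n| := by
  have hn : 2 ≤ n := by omega
  have hn' : (2 : ℝ) ≤ n := by exact_mod_cast hn
  have hK := cumulantBound_nonneg ι (M := 4) (by norm_num)
  rcases eq_or_ne h₀ h₁ with rfl | h01
  · rw [integral_Zr_mul_self hn, abs_one, mul_one, ← div_eq_mul_inv]
    refine (abs_jointCumulant_le_of_eq hm hLm hab hxa hxb h0L hξa hξb hL hξ).trans ?_
    refine div_le_div_of_nonneg_right ?_ (Nat.cast_nonneg n)
    have hm1 : (1 : ℝ) ≤ m + 1 := by linarith [(Nat.cast_nonneg m : (0 : ℝ) ≤ m)]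
    have : (2 : ℝ) * (m + 1) ^ 2 ≤ 4 * (m + 1) ^ 3 := by nlinarith
    exact mul_le_mul_of_nonneg_right this hK
  · rw [integral_Zr_mul_of_ne hn h01, abs_div, abs_neg, abs_one,
      abs_of_pos (by linarith : (0 : ℝ) < n - 1),
      show ∀ A : ℝ, A * (n : ℝ)⁻¹ * (1 / (n - 1)) = A / (n * (n - 1)) from fun A => by
        rw [one_div, mul_assoc, ← mul_inv, ← div_eq_mul_inv]]
    refine (abs_jointCumulant_le_of_ne hm hLm hab hxa hxb h01 h0L h1L hξa hξb hL hξ).trans ?_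
    exact div_le_div_of_nonneg_left (by positivity) (by nlinarith) (by nlinarith)

end Estimates

/-- For fixed `s ≥ 2` there is a constant `C` such that, for all large enough `n` and all
indices `l_1,…,l_s, h_1, h_2` with `l_1 = l_2`, with `l_2,…,l_s` mutually distinct and
distinct from `h_1, h_2`,
`|C(Z_{l_1},Z_{l_1},…,Z_{l_s},Z_{l_s},Z_{h_1},Z_{h_2})| ≤ C·n^{−1}·|E[Z_{h_1}Z_{h_2}]|`. -/
theorem spearman_cumulant_repeated_l_bound (s : ℕ) (hs : 2 ≤ s) :
    ∃ C : ℝ, ∃ N : ℕ, ∀ n : ℕ, N ≤ n →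
      ∀ l : Fin s → Fin n, ∀ h : Fin 2 → Fin n,
        l ⟨0, by omega⟩ = l ⟨1, by omega⟩ →
        (∀ i j : Fin s, 1 ≤ (i : ℕ) → 1 ≤ (j : ℕ) → i ≠ j → l i ≠ l j) →
        (∀ i : Fin s, 1 ≤ (i : ℕ) → l i ≠ h 0 ∧ l i ≠ h 1) →
        |jointCumulant (permMeasure n)
            (fun x : (Fin s × Fin 2) ⊕ Fin 2 =>
              Sum.elim (fun i : Fin s × Fin 2 => Zr n (l i.1)) (fun a => Zr n (h a)) x)| ≤
          C * (n : ℝ) ^ (-1 : ℤ) *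
            |∫ σ, Zr n (h 0) σ * Zr n (h 1) σ ∂(permMeasure n)| := by
  refine ⟨4 * (s + 1) ^ 3 * cumulantBound ((Fin s × Fin 2) ⊕ Fin 2) 4, 2 * (s + 1),
    fun n hn l h hl01 _ hlh => ?_⟩
  set L := (Finset.univ.filter fun i : Fin s => (i : ℕ) ≠ 0).image l
  have hlL : ∀ i, l i ∈ L := fun i => by
    rcases eq_or_ne (i : ℕ) 0 with hi | hi
    · rw [show i = ⟨0, by omega⟩ from Fin.ext hi, hl01]
      exact Finset.mem_image_of_mem l (by simp)
    · exact Finset.mem_image_of_mem l (by simp [hi])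
  have hhL : ∀ k, h k ∉ L := fun k hk => by
    obtain ⟨i, hi, hik⟩ := Finset.mem_image.1 hk
    have hi1 : 1 ≤ (i : ℕ) := Nat.one_le_iff_ne_zero.2 (Finset.mem_filter.1 hi).2
    fin_cases k
    exacts [(hlh i hi1).1 hik, (hlh i hi1).2 hik]
  rw [zpow_neg_one]
  refine abs_jointCumulant_le (a := .inr 0) (b := .inr 1) (x := .inl (⟨0, by omega⟩, 0)) hn
    (Finset.card_image_le.trans ((Finset.card_filter_le _ _).trans (by simp))) (by simp)
    (by simp) (by simp) (hhL 0) (hhL 1) rfl rfl (fun β hβa hβb => ?_) fun β σ => ?_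
  · rcases β with ⟨i, -⟩ | k
    · exact Zr_mem_coordSubalgebra (hlL i)
    · fin_cases k <;> simp_all
  · rcases β with ⟨i, -⟩ | k <;> exact abs_Zr_le n _ σ
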